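/- arXiv:2112.07568 — 5 statements merged into one kernel-verified Lean document; each statement's English description precedes it below -/
import Mathlib

section
/- Let λ ∈ ℝ, let b₂(x) = (1/6)·x·(1-x)³, let a₂ = b₂'''' + λ b₂'', and set σ_n = -n⁴π⁴ + λ n²π² for integer n ≥ 1. Then for every integer n ≥ 1, ∫₀¹ a₂(x)·√2 sin(nπx) dx + σ_n ∫₀¹ b₂(x)·√2 sin(nπx) dx = -√2·nπ. In particular the projected control coefficient β_{2,n} = a_{2,n} + σ_n b_{2,n} equals -√2 nπ and is nonzero for every n ≥ 1. -/
/-!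
Write `L f = f'''' + λ f''`. Differentiating
`W = f''' g - f'' g' + f' g'' - f g''' + λ (f' g - f g')` gives `W' = (L f) g - f (L g)`, so
`∫₀¹ ((L f) g - f (L g))` is a difference of boundary values of `W`. For `g = c sin (k x)` with
`sin k = 0` one has `L g = (k⁴ - λ k²) g = -σ g`, and `g`, `g''` vanish at `0` and `1`; if also
`f(0) = f(1) = 0`, only `f''(0) g'(0) - f''(1) g'(1)` survives. For `f = b₂` and `k = nπ` this is
`b₂''(0) · √2 nπ = -√2 nπ`.
-/

open Real

theorem hasDerivAt_iteratedDeriv {f : ℝ → ℝ} {n k : ℕ} (hf : ContDiff ℝ n f) (hk : k < n)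
    (x : ℝ) : HasDerivAt (iteratedDeriv k f) (iteratedDeriv (k + 1) f x) x := by
  rw [iteratedDeriv_succ]
  exact (hf.differentiable_iteratedDeriv k (mod_cast hk) x).hasDerivAt

theorem integral_green_fourth_order_of_hinged {f g : ℝ → ℝ} (hf : ContDiff ℝ 4 f)
    (hg : ContDiff ℝ 4 g) (lam : ℝ) {a b : ℝ} (hfa : f a = 0) (hfb : f b = 0) (hga : g a = 0)
    (hgb : g b = 0) (hg2a : iteratedDeriv 2 g a = 0) (hg2b : iteratedDeriv 2 g b = 0) :
    ∫ x in a..b, ((iteratedDeriv 4 f x + lam * iteratedDeriv 2 f x) * g x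
        - f x * (iteratedDeriv 4 g x + lam * iteratedDeriv 2 g x)) =
      iteratedDeriv 2 f a * deriv g a - iteratedDeriv 2 f b * deriv g b := by
  have df (k : ℕ) (hk : k < 4) := hasDerivAt_iteratedDeriv hf hk
  have dg (k : ℕ) (hk : k < 4) := hasDerivAt_iteratedDeriv hg hk
  have df0 (x : ℝ) : HasDerivAt f (iteratedDeriv 1 f x) x := by simpa using df 0 (by norm_num) x
  have dg0 (x : ℝ) : HasDerivAt g (iteratedDeriv 1 g x) x := by simpa using dg 0 (by norm_num) x
  rw [intervalIntegral.integral_eq_sub_of_hasDerivAt (f := fun x =>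
      iteratedDeriv 3 f x * g x - iteratedDeriv 2 f x * iteratedDeriv 1 g x
        + iteratedDeriv 1 f x * iteratedDeriv 2 g x - f x * iteratedDeriv 3 g x
        + lam * (iteratedDeriv 1 f x * g x - f x * iteratedDeriv 1 g x))]
  · simp only [iteratedDeriv_one, hfa, hfb, hga, hgb, hg2a, hg2b]
    ring
  · intro x _
    refine ((((((df 3 (by norm_num) x).mul (dg0 x)).sub
      ((df 2 (by norm_num) x).mul (dg 1 (by norm_num) x))).add
      ((df 1 (by norm_num) x).mul (dg 2 (by norm_num) x))).sub
      ((df0 x).mul (dg 3 (by norm_num) x))).add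
      ((((df 1 (by norm_num) x).mul (dg0 x)).sub
      ((df0 x).mul (dg 1 (by norm_num) x))).const_mul lam)).congr_deriv ?_
    ring
  · apply Continuous.intervalIntegrable
    have hf4 := hf.continuous_iteratedDeriv 4 le_rfl
    have hf2 := hf.continuous_iteratedDeriv 2 (by norm_num)
    have hg4 := hg.continuous_iteratedDeriv 4 le_rfl
    have hg2 := hg.continuous_iteratedDeriv 2 (by norm_num)
    have hf_cont := hf.continuous
    have hg_cont := hg.continuous
    fun_prop

theorem iteratedDeriv_even_const_mul_sin_mul (c k : ℝ) (m : ℕ) :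
    iteratedDeriv (2 * m) (fun x => c * sin (k * x)) =
      fun x => (-k ^ 2) ^ m * (c * sin (k * x)) := by
  funext x
  rw [iteratedDeriv_const_mul_field, iteratedDeriv_comp_const_mul contDiff_sin,
    iteratedDeriv_even_sin]
  simp only [Pi.mul_apply, Pi.pow_apply, Pi.neg_apply, Pi.one_apply]
  ring

theorem deriv_const_mul_sin_mul (c k : ℝ) :
    deriv (fun x => c * sin (k * x)) = fun x => c * k * cos (k * x) := by
  funext x
  exact ((((hasDerivAt_id' x).const_mul k).sin).const_mul c).deriv.trans (by ring)

theorem iteratedDeriv_two_lifting_profile :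
    iteratedDeriv 2 (fun x : ℝ => (1/6) * x * (1 - x)^3) =
      fun x => -((1 - x) * (1 - 2 * x)) := by
  have h1 : deriv (fun x : ℝ => (1/6) * x * (1 - x)^3) =
      fun x => (1 - x)^2 * (1 - 4 * x) / 6 := by
    funext x
    refine ((((hasDerivAt_id' x).const_mul (1/6)).mul
      (((hasDerivAt_id' x).const_sub 1).fun_pow 3)).congr_deriv ?_).deriv
    ring
  rw [iteratedDeriv_succ, iteratedDeriv_one, h1]
  funext x
  refine (((((hasDerivAt_id' x).const_sub 1).fun_pow 2).mul
    (((hasDerivAt_id' x).const_mul 4).const_sub 1)).div_const 6).congr_deriv ?_ |>.deriv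
  ring

theorem integral_fourth_order_mul_sin_add_eigenvalue_mul {f : ℝ → ℝ} (hf : ContDiff ℝ 4 f)
    (hf0 : f 0 = 0) (hf1 : f 1 = 0) (lam c : ℝ) {k : ℝ} (hk : sin k = 0) :
    (∫ x in (0:ℝ)..1, (iteratedDeriv 4 f x + lam * iteratedDeriv 2 f x) * (c * sin (k * x)))
      + (-k ^ 4 + lam * k ^ 2) * ∫ x in (0:ℝ)..1, f x * (c * sin (k * x)) =
      c * k * (iteratedDeriv 2 f 0 - iteratedDeriv 2 f 1 * cos k) := by
  set φ : ℝ → ℝ := fun x => c * sin (k * x)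
  have hφ2 : iteratedDeriv 2 φ = fun x => -k ^ 2 * φ x := by
    simpa using iteratedDeriv_even_const_mul_sin_mul c k 1
  have hφ4 : iteratedDeriv 4 φ = fun x => k ^ 4 * φ x := by
    simpa [← pow_mul] using iteratedDeriv_even_const_mul_sin_mul c k 2
  have green := integral_green_fourth_order_of_hinged hf (by fun_prop : ContDiff ℝ 4 φ) lam
    hf0 hf1 (by simp [φ]) (by simp [φ, hk]) (by rw [hφ2]; simp [φ]) (by rw [hφ2]; simp [φ, hk])
  have hLf : Continuous fun x => iteratedDeriv 4 f x + lam * iteratedDeriv 2 f x :=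
    (hf.continuous_iteratedDeriv 4 le_rfl).add
      ((hf.continuous_iteratedDeriv 2 (by norm_num)).const_mul lam)
  have hf_cont := hf.continuous
  calc _ = ∫ x in (0:ℝ)..1, ((iteratedDeriv 4 f x + lam * iteratedDeriv 2 f x) * φ x
          + (-k ^ 4 + lam * k ^ 2) * (f x * φ x)) := by
        rw [intervalIntegral.integral_add, intervalIntegral.integral_const_mul]
        all_goals exact Continuous.intervalIntegrable (by fun_prop) _ _
    _ = ∫ x in (0:ℝ)..1, ((iteratedDeriv 4 f x + lam * iteratedDeriv 2 f x) * φ x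
          - f x * (iteratedDeriv 4 φ x + lam * iteratedDeriv 2 φ x)) := by
        simp only [hφ2, hφ4]
        congr 1
        funext x
        ring
    _ = _ := by
        rw [green, deriv_const_mul_sin_mul]
        simp only [mul_zero, mul_one, cos_zero]
        ring

/-- For the lifting profile b₂(x) = x(1-x)³/6 and a₂ = b₂'''' + λ b₂'',
    the projected control coefficient β_{2,n} = a_{2,n} + σₙ b_{2,n} equals -√2 nπ ≠ 0. -/
theorem projected_control_coefficient_second_channel (lam : ℝ) (n : ℕ) (hn : 1 ≤ n) :
    ((∫ x in (0:ℝ)..1,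
        (iteratedDeriv 4 (fun x : ℝ => (1/6) * x * (1 - x)^3) x
          + lam * iteratedDeriv 2 (fun x : ℝ => (1/6) * x * (1 - x)^3) x)
          * (Real.sqrt 2 * Real.sin (n * π * x)))
      + (-(n : ℝ)^4 * π^4 + lam * (n : ℝ)^2 * π^2) *
          ∫ x in (0:ℝ)..1, ((1/6) * x * (1 - x)^3) * (Real.sqrt 2 * Real.sin (n * π * x))
      = -Real.sqrt 2 * n * π)
    ∧ -Real.sqrt 2 * (n : ℝ) * π ≠ 0 := by
  have hn0 : (n : ℝ) ≠ 0 := Nat.cast_ne_zero.2 (by omega)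
  refine ⟨?_, mul_ne_zero (mul_ne_zero (neg_ne_zero.2 (by positivity)) hn0) pi_ne_zero⟩
  have hσ : -(n : ℝ) ^ 4 * π ^ 4 + lam * (n : ℝ) ^ 2 * π ^ 2 =
      -(n * π) ^ 4 + lam * (n * π) ^ 2 := by
    ring
  rw [hσ, integral_fourth_order_mul_sin_add_eigenvalue_mul (by fun_prop) (by norm_num) (by norm_num)
    lam _ (sin_nat_mul_pi n), iteratedDeriv_two_lifting_profile]
  ring
end

section
/- Let λ > 0, δ > 0, and let N₀ ≥ 1 be an integer such that σ_n < -δ for all integers n ≥ N₀ + 1, where σ_n = -n⁴π⁴ + λn²π². Define β_n = -√2·nπ·(λ - n²π²). Then the following equivalence holds: ( β_n ≠ 0 for all 1 ≤ n ≤ N₀, and σ_n ≠ σ_m for all 1 ≤ n < m ≤ N₀ ) if and only if λ ∉ Λ₁ ∪ Λ₂, where Λ₁ = { n²π² : n a positive integer } and Λ₂ = { (n²+m²)π² : n, m positive integers with n < m }. -/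
open Real

/-- Kalman controllability condition for Dirichlet actuation:
    (βₙ ≠ 0 for 1 ≤ n ≤ N₀ and σₙ ≠ σₘ for 1 ≤ n < m ≤ N₀) ↔ λ ∉ Λ₁ ∪ Λ₂. -/
theorem kalman_controllability_dirichlet (lam δ : ℝ) (hlam : 0 < lam) (hδ : 0 < δ)
    (N0 : ℕ) (hN0 : 1 ≤ N0)
    (hstable : ∀ n : ℕ, N0 + 1 ≤ n →
      -(n : ℝ)^4 * π^4 + lam * (n : ℝ)^2 * π^2 < -δ) :
    ((∀ n : ℕ, 1 ≤ n → n ≤ N0 → -Real.sqrt 2 * (n : ℝ) * π * (lam - (n : ℝ)^2 * π^2) ≠ 0)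
      ∧ (∀ n m : ℕ, 1 ≤ n → n < m → m ≤ N0 →
          -(n : ℝ)^4 * π^4 + lam * (n : ℝ)^2 * π^2
            ≠ -(m : ℝ)^4 * π^4 + lam * (m : ℝ)^2 * π^2))
    ↔ lam ∉ (({x : ℝ | ∃ n : ℕ, 1 ≤ n ∧ x = (n : ℝ)^2 * π^2}
        ∪ {x : ℝ | ∃ n m : ℕ, 1 ≤ n ∧ n < m ∧ x = ((n : ℝ)^2 + (m : ℝ)^2) * π^2}) : Set ℝ) := by
  have hπ : (0:ℝ) < π := Real.pi_pos
  constructor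
  · rintro ⟨hβ, hσ⟩ (⟨n, hn1, hn⟩ | ⟨n, m, hn1, hnm, hx⟩)
    · -- lam = n²π²
      rcases le_or_gt n N0 with h | h
      · exact hβ n hn1 h (by rw [hn]; ring)
      · have := hstable n (by omega)
        have : -(n : ℝ)^4 * π^4 + lam * (n : ℝ)^2 * π^2 = 0 := by rw [hn]; ring
        linarith [hstable n (by omega)]
    · -- lam = (n²+m²)π²
      have hnpos : (0:ℝ) < n := by exact_mod_cast hn1
      have hmpos : (0:ℝ) < m := by exact_mod_cast (by omega : 0 < m)
      rcases le_or_gt m N0 with h | h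
      · exact hσ n m hn1 hnm h (by rw [hx]; ring)
      · have hs := hstable m (by omega)
        have heq : -(m : ℝ)^4 * π^4 + lam * (m : ℝ)^2 * π^2
            = (n:ℝ)^2 * (m:ℝ)^2 * π^4 := by rw [hx]; ring
        have : (0:ℝ) < (n:ℝ)^2 * (m:ℝ)^2 * π^4 := by positivity
        linarith
  · intro hmem
    constructor
    · intro n hn1 hn hzero
      have hnpos : (0:ℝ) < n := by exact_mod_cast hn1
      have h2 : Real.sqrt 2 ≠ 0 := by positivity
      have hpre : -Real.sqrt 2 * (n : ℝ) * π ≠ 0 :=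
        mul_ne_zero (mul_ne_zero (neg_ne_zero.mpr h2) (ne_of_gt hnpos)) (ne_of_gt hπ)
      have : lam - (n:ℝ)^2 * π^2 = 0 := by
        rcases mul_eq_zero.mp hzero with h | h
        · exact absurd h hpre
        · exact h
      exact hmem (Or.inl ⟨n, hn1, by linarith⟩)
    · intro n m hn1 hnm hm heq
      have key : ((n:ℝ)^2 - (m:ℝ)^2) * π^2 * (lam - ((n:ℝ)^2 + (m:ℝ)^2) * π^2) = 0 := by
        nlinarith [heq]
      have hne : ((n:ℝ)^2 - (m:ℝ)^2) ≠ 0 := by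
        have : (n:ℝ) < m := by exact_mod_cast hnm
        have hnpos : (0:ℝ) ≤ n := Nat.cast_nonneg n
        nlinarith
      have : lam - ((n:ℝ)^2 + (m:ℝ)^2) * π^2 = 0 := by
        rcases mul_eq_zero.mp key with h | h
        · rcases mul_eq_zero.mp h with h' | h'
          · exact absurd h' hne
          · exact absurd h' (by positivity)
        · exact h
      exact hmem (Or.inr ⟨n, m, hn1, hnm, by linarith⟩)
end

section
/- Let λ > 0, δ > 0, and let N₀ ≥ 1 be an integer such that σ_n < -δ for all integers n ≥ N₀ + 1, where σ_n = -n⁴π⁴ + λn²π². Then ( σ_n ≠ σ_m for all 1 ≤ n < m ≤ N₀ ) if and only if λ ∉ Λ₂, where Λ₂ = { (n²+m²)π² : n, m positive integers with n < m }. -/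
open Real

/-- Kalman observability condition for the Neumann output:
    pairwise distinctness of σ₁,…,σ_{N₀} ↔ λ ∉ Λ₂. -/
theorem kalman_observability_neumann (lam δ : ℝ) (hlam : 0 < lam) (hδ : 0 < δ)
    (N0 : ℕ) (hN0 : 1 ≤ N0)
    (hstable : ∀ n : ℕ, N0 + 1 ≤ n →
      -(n : ℝ)^4 * π^4 + lam * (n : ℝ)^2 * π^2 < -δ) :
    (∀ n m : ℕ, 1 ≤ n → n < m → m ≤ N0 →
        -(n : ℝ)^4 * π^4 + lam * (n : ℝ)^2 * π^2
          ≠ -(m : ℝ)^4 * π^4 + lam * (m : ℝ)^2 * π^2)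
    ↔ lam ∉ ({x : ℝ | ∃ n m : ℕ, 1 ≤ n ∧ n < m ∧ x = ((n : ℝ)^2 + (m : ℝ)^2) * π^2} : Set ℝ) := by
  have hπ : (0:ℝ) < π := Real.pi_pos
  constructor
  · intro h hmem
    obtain ⟨n, m, hn, hnm, hx⟩ := hmem
    have hn1 : (1:ℝ) ≤ (n:ℝ) := by exact_mod_cast hn
    have hmN : m ≤ N0 := by
      by_contra hc
      push_neg at hc
      have hs := hstable m (by omega)
      rw [hx] at hs
      nlinarith [sq_nonneg ((n:ℝ)*π), sq_nonneg ((m:ℝ)*π), sq_nonneg π,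
        mul_pos hπ hπ]
    have := h n m hn hnm hmN
    apply this
    rw [hx]; ring
  · intro h n m hn hnm hmN heq
    apply h
    refine ⟨n, m, hn, hnm, ?_⟩
    have hne : ((n:ℝ)^2 - (m:ℝ)^2) * π^2 ≠ 0 := by
      have hlt : (n:ℝ) < (m:ℝ) := by exact_mod_cast hnm
      have hn0 : (0:ℝ) ≤ (n:ℝ) := Nat.cast_nonneg n
      have : (n:ℝ)^2 < (m:ℝ)^2 := by nlinarith
      have := mul_pos hπ hπ
      nlinarith
    have key : (lam - ((n:ℝ)^2 + (m:ℝ)^2) * π^2) * (((n:ℝ)^2 - (m:ℝ)^2) * π^2) = 0 := by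
      linear_combination heq
    rcases mul_eq_zero.mp key with h1 | h1
    · linarith [h1]
    · exact absurd h1 hne
end

section
/- Let n < m be positive integers and let λ = (n² + m²)π². Define β_{1,k} = -√2·kπ·(λ - k²π²) and β_{2,k} = -√2·kπ for each positive integer k. Then β_{1,n}·β_{2,m} - β_{1,m}·β_{2,n} = 2·n·m·(m² - n²)·π⁴, which is strictly positive; in particular the 2×2 matrix with rows (β_{1,n}, β_{2,n}) and (β_{1,m}, β_{2,m}) is invertible. -/
open Real

/-- When λ = (n²+m²)π², the 2×2 controllability block of the two-input scheme
    has determinant β_{1,n}β_{2,m} - β_{1,m}β_{2,n} = 2nm(m²-n²)π⁴ > 0,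
    hence the block is invertible. -/
theorem two_input_controllability_block (n m : ℕ) (hn : 1 ≤ n) (hnm : n < m)
    (lam : ℝ) (hlam : lam = ((n : ℝ)^2 + (m : ℝ)^2) * π^2) :
    ((-Real.sqrt 2 * (n : ℝ) * π * (lam - (n : ℝ)^2 * π^2)) * (-Real.sqrt 2 * (m : ℝ) * π)
        - (-Real.sqrt 2 * (m : ℝ) * π * (lam - (m : ℝ)^2 * π^2)) * (-Real.sqrt 2 * (n : ℝ) * π)
      = 2 * (n : ℝ) * (m : ℝ) * ((m : ℝ)^2 - (n : ℝ)^2) * π^4)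
    ∧ 0 < 2 * (n : ℝ) * (m : ℝ) * ((m : ℝ)^2 - (n : ℝ)^2) * π^4
    ∧ IsUnit (Matrix.of
        ![![-Real.sqrt 2 * (n : ℝ) * π * (lam - (n : ℝ)^2 * π^2), -Real.sqrt 2 * (n : ℝ) * π],
          ![-Real.sqrt 2 * (m : ℝ) * π * (lam - (m : ℝ)^2 * π^2), -Real.sqrt 2 * (m : ℝ) * π]]
        : Matrix (Fin 2) (Fin 2) ℝ) := by
  have hs : Real.sqrt 2 * Real.sqrt 2 = 2 := Real.mul_self_sqrt (by norm_num)
  have hdet : (-Real.sqrt 2 * (n : ℝ) * π * (lam - (n : ℝ)^2 * π^2)) * (-Real.sqrt 2 * (m : ℝ) * π)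
        - (-Real.sqrt 2 * (m : ℝ) * π * (lam - (m : ℝ)^2 * π^2)) * (-Real.sqrt 2 * (n : ℝ) * π)
      = 2 * (n : ℝ) * (m : ℝ) * ((m : ℝ)^2 - (n : ℝ)^2) * π^4 := by
    subst hlam
    linear_combination ((n:ℝ) * (m:ℝ) * ((m:ℝ)^2 - (n:ℝ)^2) * π^4) * hs
  have hnpos : (0:ℝ) < n := by exact_mod_cast hn
  have hlt : (n:ℝ) < m := by exact_mod_cast hnm
  have hmpos : (0:ℝ) < m := hnpos.trans hlt
  have hpos : 0 < 2 * (n : ℝ) * (m : ℝ) * ((m : ℝ)^2 - (n : ℝ)^2) * π^4 := by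
    have h2 : (0:ℝ) < (m:ℝ)^2 - (n:ℝ)^2 := by nlinarith
    have hpi : (0:ℝ) < π^4 := by positivity
    have := mul_pos (mul_pos (mul_pos (mul_pos (by norm_num : (0:ℝ) < 2) hnpos) hmpos) h2) hpi
    linarith
  refine ⟨hdet, hpos, ?_⟩
  rw [Matrix.isUnit_iff_isUnit_det, Matrix.det_fin_two]
  simp only [Matrix.of_apply, Matrix.cons_val', Matrix.cons_val_zero, Matrix.cons_val_one,
    Matrix.head_cons, Matrix.empty_val', Matrix.cons_val_fin_one, Matrix.head_fin_const]
  rw [isUnit_iff_ne_zero]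
  intro h
  have h2 : 2 * (n : ℝ) * (m : ℝ) * ((m : ℝ)^2 - (n : ℝ)^2) * π^4 = 0 := by
    linear_combination h - hdet
  exact hpos.ne' h2
end

section
/- Let κ > δ > 0 and C > 0. Let V : [0,∞) → ℝ be differentiable and nonnegative, with V'(t) + 2κ V(t) ≤ C V(t)² for all t ≥ 0, and suppose V(0) < 2(κ - δ)/C. Then V(t) ≤ e^{-2δ t} V(0) for all t ≥ 0. -/
open Real Set Filter Topology

/-!
While `V` stays below the threshold `2(κ - δ)/C`, the quadratic term is dominated by the linear
one: `C V² < 2(κ - δ) V`, hence `V' < -2δ V` wherever `V > 0`. So for every `c` between `V 0`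
and the threshold, the curve `t ↦ e^{-2δt} c` is a barrier that `V` can never cross from below;
letting `c` decrease to `V 0` gives the claim.
-/

theorem lt_neg_two_mul_of_add_le_mul_sq {κ δ C v d : ℝ} (hC : 0 < C) (hv : 0 < v)
    (hv_lt : v < 2 * (κ - δ) / C) (h : d + 2 * κ * v ≤ C * v ^ 2) : d < -2 * δ * v := by
  have hCv : C * v < 2 * (κ - δ) := (lt_div_iff₀' hC).mp hv_lt
  nlinarith

theorem le_exp_mul_of_deriv_lt_on_boundary {V : ℝ → ℝ} {r c : ℝ}
    (hdiff : ∀ t, 0 ≤ t → DifferentiableAt ℝ V t) (h₀ : V 0 ≤ c)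
    (hbound : ∀ t, 0 ≤ t → V t = exp (r * t) * c → deriv V t < r * V t)
    {t : ℝ} (ht : 0 ≤ t) : V t ≤ exp (r * t) * c := by
  have hB : ∀ x, HasDerivAt (fun x => exp (r * x) * c) (r * (exp (r * x) * c)) x := fun x =>
    (((hasDerivAt_id x).const_mul r).exp.mul_const c).congr_deriv (by simp only [id]; ring)
  refine image_le_of_deriv_right_lt_deriv_boundary
    (fun x hx => (hdiff x hx.1).continuousAt.continuousWithinAt)
    (fun x hx => (hdiff x hx.1).hasDerivAt.hasDerivWithinAt) (by simpa using h₀) hB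
    (fun x hx hVx => ?_) ⟨ht, le_rfl⟩
  rw [← hVx]
  exact hbound x hx.1 hVx

theorem quadratic_comparison_lemma_general (κ δ C : ℝ) (hδ : 0 < δ) (hC : 0 < C)
    (V : ℝ → ℝ)
    (hdiff : ∀ t : ℝ, 0 ≤ t → DifferentiableAt ℝ V t)
    (hnonneg : ∀ t : ℝ, 0 ≤ t → 0 ≤ V t)
    (hineq : ∀ t : ℝ, 0 ≤ t → deriv V t + 2 * κ * V t ≤ C * V t ^ 2)
    (hinit : V 0 < 2 * (κ - δ) / C) :
    ∀ t : ℝ, 0 ≤ t → V t ≤ Real.exp (-2 * δ * t) * V 0 := by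
  intro t ht
  have hbarrier : ∀ c ∈ Ioo (V 0) (2 * (κ - δ) / C), V t ≤ exp (-2 * δ * t) * c := by
    rintro c ⟨hc₀, hc⟩
    have hc_pos : 0 < c := (hnonneg 0 le_rfl).trans_lt hc₀
    refine le_exp_mul_of_deriv_lt_on_boundary hdiff hc₀.le (fun x hx hVx => ?_) ht
    have hdecay : exp (-2 * δ * x) ≤ 1 := exp_le_one_iff.mpr (by nlinarith)
    have hpos : 0 < V x := hVx ▸ mul_pos (exp_pos _) hc_pos
    have hbelow : V x < 2 * (κ - δ) / C := hVx ▸ by nlinarith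
    exact lt_neg_two_mul_of_add_le_mul_sq hC hpos hbelow (hineq x hx)
  exact ge_of_tendsto (((continuous_const_mul _).tendsto (V 0)).mono_left nhdsWithin_le_nhds)
    ((eventually_mem_set.mpr (Ioo_mem_nhdsGT hinit)).mono hbarrier)

/-- Local comparison lemma: if V ≥ 0 is differentiable on [0,∞) with
    V' + 2κV ≤ CV² and V(0) < 2(κ-δ)/C, then V(t) ≤ e^{-2δt} V(0). -/
theorem quadratic_comparison_lemma (κ δ C : ℝ) (hδ : 0 < δ) (hκ : δ < κ) (hC : 0 < C)
    (V : ℝ → ℝ)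
    (hdiff : ∀ t : ℝ, 0 ≤ t → DifferentiableAt ℝ V t)
    (hnonneg : ∀ t : ℝ, 0 ≤ t → 0 ≤ V t)
    (hineq : ∀ t : ℝ, 0 ≤ t → deriv V t + 2 * κ * V t ≤ C * V t ^ 2)
    (hinit : V 0 < 2 * (κ - δ) / C) :
    ∀ t : ℝ, 0 ≤ t → V t ≤ Real.exp (-2 * δ * t) * V 0 :=
  quadratic_comparison_lemma_general κ δ C hδ hC V hdiff hnonneg hineq hinit
end
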